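/- Define polynomials Ẽ_s by Ẽ₁(β) = (1/24)β(7β² - 6), Ẽ₂(β) = (1/16)(1-β²)²(2-7β²), and for s ≥ 2, Ẽ_{s+1}(β) = -(1/2)(1-β²)² Ẽ_s'(β) - (1/2)∫_{σ(s)}^{β}(1-p²)² Σ_{j=1}^{s-1} Ẽ_j'(p)Ẽ_{s-j}'(p) dp with σ(s)=1 for s odd and 0 for s even. Then Ẽ_{2s} is even, Ẽ_{2s+1} is odd, and Ẽ_{2s}(±1) = 0 for all s ≥ 1. -/

import Mathlib

/-! Each `Ẽ_n` is smooth and has parity `(-1)^n`, by strong induction on `n`: differentiation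
flips parity, so the integrand `(1-p²)² Σ Ẽ_j' Ẽ_{n+2-j}'` has parity `(-1)^n`, and its primitive
from `σ(n+2)` has the opposite one — from `0` when the integrand is even, and from `1` when it is
odd, because an odd function integrates to zero over `[-1, 1]`. Both terms of the recursion for
`Ẽ_{2s}` vanish at `β = 1 = σ(2s-1)`, and `Ẽ_{2s}(-1) = Ẽ_{2s}(1)` by evenness. -/

open intervalIntegral

/-- Lower integration limit: `σ(s) = 1` for `s` odd, `σ(s) = 0` for `s` even. -/
noncomputable def sigmaLG (s : ℕ) : ℝ := if Odd s then 1 else 0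

/-- The coefficients `Ẽ_s`:
`Ẽ₁(β) = (1/24)β(7β²-6)`, `Ẽ₂(β) = (1/16)(1-β²)²(2-7β²)`, and for `s ≥ 2`
`Ẽ_{s+1}(β) = -(1/2)(1-β²)² Ẽ_s'(β)
  - (1/2)∫_{σ(s)}^β (1-p²)² Σ_{j=1}^{s-1} Ẽ_j'(p) Ẽ_{s-j}'(p) dp`. -/
noncomputable def EtCoef : ℕ → ℝ → ℝ
  | 0 => fun _ => 0
  | 1 => fun β => β * (7 * β ^ 2 - 6) / 24
  | 2 => fun β => (1 - β ^ 2) ^ 2 * (2 - 7 * β ^ 2) / 16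
  | (n + 3) => fun β =>
      -((1 - β ^ 2) ^ 2 * deriv (EtCoef (n + 2)) β / 2)
      - (∫ p in sigmaLG (n + 2)..β, (1 - p ^ 2) ^ 2 *
          ∑ j ∈ (Finset.Icc 1 (n + 1)).attach,
            deriv (EtCoef j.1) p * deriv (EtCoef (n + 2 - j.1)) p) / 2
  decreasing_by
  · omega
  · have := (Finset.mem_Icc.mp j.2).2; omega
  · have := (Finset.mem_Icc.mp j.2).1; omega

open scoped ContDiff

theorem deriv_neg_of_comp_neg {f : ℝ → ℝ} {c : ℝ} (h : ∀ x, f (-x) = c * f x) (x : ℝ) :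
    deriv f (-x) = -c * deriv f x := by
  have := deriv_comp_neg f x
  rw [funext h, deriv_const_mul_field] at this
  linarith

theorem integral_neg_right_of_comp_neg {g : ℝ → ℝ} {c : ℝ} (h : ∀ x, g (-x) = c * g x)
    (a b : ℝ) : ∫ x in a..-b, g x = -c * ∫ x in -a..b, g x := by
  have := integral_comp_neg (a := -a) (b := b) g
  simp only [h, integral_const_mul, neg_neg] at this
  rw [integral_symm, ← this]
  ring

theorem integral_neg_left_of_odd {g : ℝ → ℝ} (hg : Continuous g) (h : ∀ x, g (-x) = -g x)
    (a b : ℝ) : ∫ x in -a..b, g x = ∫ x in a..b, g x := by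
  have hsymm : ∫ x in -a..a, g x = 0 := by
    have := integral_neg_right_of_comp_neg (g := g) (c := -1) (fun x => by rw [h]; ring) a a
    rw [integral_symm] at this
    linarith
  rw [← integral_add_adjacent_intervals (hg.intervalIntegrable (-a) a)
    (hg.intervalIntegrable a b), hsymm, zero_add]

theorem integral_sigmaLG_neg {g : ℝ → ℝ} {n : ℕ} (hg : Continuous g)
    (h : ∀ x, g (-x) = (-1) ^ n * g x) (b : ℝ) :
    ∫ x in sigmaLG n..-b, g x = (-1) ^ (n + 1) * ∫ x in sigmaLG n..b, g x := by
  rw [integral_neg_right_of_comp_neg h, pow_succ, mul_neg_one]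
  rcases n.even_or_odd with hn | hn
  · simp [sigmaLG, Nat.not_odd_iff_even.2 hn]
  · rw [hn.neg_one_pow] at h
    simp only [sigmaLG, if_pos hn]
    rw [integral_neg_left_of_odd hg (by simpa using h)]

theorem contDiff_integral_right {g : ℝ → ℝ} (hg : ContDiff ℝ ∞ g) (a : ℝ) :
    ContDiff ℝ ∞ (fun b => ∫ x in a..b, g x) := by
  rw [contDiff_infty_iff_deriv, funext (Continuous.deriv_integral g hg.continuous a)]
  exact ⟨differentiable_integral_of_continuous hg.continuous, hg⟩

noncomputable def EtIntegrand (n : ℕ) (p : ℝ) : ℝ :=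
  (1 - p ^ 2) ^ 2 * ∑ j ∈ Finset.Icc 1 (n + 1), deriv (EtCoef j) p * deriv (EtCoef (n + 2 - j)) p

theorem EtCoef_add_three (n : ℕ) : EtCoef (n + 3) = fun β =>
    -((1 - β ^ 2) ^ 2 * deriv (EtCoef (n + 2)) β / 2)
      - (∫ p in sigmaLG (n + 2)..β, EtIntegrand n p) / 2 := by
  rw [EtCoef]
  funext β
  congr 3
  funext p
  rw [EtIntegrand, Finset.sum_attach _ fun j => deriv (EtCoef j) p * deriv (EtCoef (n + 2 - j)) p]

theorem contDiff_EtIntegrand {n : ℕ} (h : ∀ m ≤ n + 1, ContDiff ℝ ∞ (EtCoef m)) :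
    ContDiff ℝ ∞ (EtIntegrand n) := by
  have hd : ∀ m ≤ n + 1, ContDiff ℝ ∞ (deriv (EtCoef m)) := fun m hm =>
    (contDiff_infty_iff_deriv.1 (h m hm)).2
  unfold EtIntegrand
  refine contDiff_const.sub (contDiff_id.pow 2) |>.pow 2 |>.mul (ContDiff.sum fun j hj => ?_)
  have := Finset.mem_Icc.1 hj
  exact (hd j (by omega)).mul (hd (n + 2 - j) (by omega))

theorem contDiff_EtCoef (n : ℕ) : ContDiff ℝ ∞ (EtCoef n) := by
  induction n using Nat.strong_induction_on with
  | _ n ih =>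
    match n, ih with
    | 0, _ => rw [EtCoef]; exact contDiff_const
    | 1, _ => rw [EtCoef]; fun_prop
    | 2, _ => rw [EtCoef]; fun_prop
    | n + 3, ih =>
      rw [EtCoef_add_three]
      have hd := (contDiff_infty_iff_deriv.1 (ih (n + 2) (by omega))).2
      have hI := contDiff_integral_right
        (contDiff_EtIntegrand (n := n) fun m hm => ih m (by omega))
        (sigmaLG (n + 2))
      fun_prop

theorem EtIntegrand_neg {n : ℕ} (h : ∀ m ≤ n + 1, ∀ x, EtCoef m (-x) = (-1) ^ m * EtCoef m x)
    (p : ℝ) : EtIntegrand n (-p) = (-1) ^ n * EtIntegrand n p := by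
  unfold EtIntegrand
  rw [Finset.mul_sum, Finset.mul_sum, Finset.mul_sum]
  refine Finset.sum_congr rfl fun j hj => ?_
  have := Finset.mem_Icc.1 hj
  rw [deriv_neg_of_comp_neg (h j (by omega)), deriv_neg_of_comp_neg (h (n + 2 - j) (by omega))]
  have hsign : (-(-1) ^ j) * (-(-1) ^ (n + 2 - j)) = ((-1) ^ n : ℝ) := by
    rw [neg_mul_neg, ← pow_add, show j + (n + 2 - j) = n + 2 by omega, pow_add]
    norm_num
  linear_combination (1 - p ^ 2) ^ 2 * deriv (EtCoef j) p * deriv (EtCoef (n + 2 - j)) p * hsign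

theorem EtCoef_neg (n : ℕ) (x : ℝ) : EtCoef n (-x) = (-1) ^ n * EtCoef n x := by
  induction n using Nat.strong_induction_on generalizing x with
  | _ n ih =>
    match n, ih with
    | 0, _ => simp [EtCoef]
    | 1, _ => simp only [EtCoef]; ring
    | 2, _ => simp only [EtCoef]; ring
    | n + 3, ih =>
      have hI := integral_sigmaLG_neg (n := n + 2)
        (contDiff_EtIntegrand (n := n) fun m _ => contDiff_EtCoef m).continuous
        (fun p => by rw [EtIntegrand_neg fun m hm => ih m (by omega)]; ring) x
      simp only [EtCoef_add_three]
      rw [deriv_neg_of_comp_neg (ih (n + 2) (by omega)), hI]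
      ring

theorem EtCoef_two_mul_one (s : ℕ) : EtCoef (2 * s) 1 = 0 := by
  match s with
  | 0 => simp [EtCoef]
  | 1 => norm_num [EtCoef]
  | k + 2 =>
    have hσ : sigmaLG (2 * k + 3) = 1 := if_pos ⟨k + 1, by ring⟩
    rw [show 2 * (k + 2) = 2 * k + 1 + 3 by ring, EtCoef_add_three, hσ]
    simp

theorem EtCoef_parity_and_vanish_general (s : ℕ) :
    (∀ β : ℝ, EtCoef (2 * s) (-β) = EtCoef (2 * s) β) ∧
    (∀ β : ℝ, EtCoef (2 * s + 1) (-β) = -EtCoef (2 * s + 1) β) ∧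
    EtCoef (2 * s) 1 = 0 ∧ EtCoef (2 * s) (-1) = 0 := by
  have heven (β : ℝ) : EtCoef (2 * s) (-β) = EtCoef (2 * s) β := by
    rw [EtCoef_neg, (even_two_mul s).neg_one_pow, one_mul]
  have hodd (β : ℝ) : EtCoef (2 * s + 1) (-β) = -EtCoef (2 * s + 1) β := by
    rw [EtCoef_neg, (odd_two_mul_add_one s).neg_one_pow, neg_one_mul]
  exact ⟨heven, hodd, EtCoef_two_mul_one s, by rw [heven, EtCoef_two_mul_one]⟩

/-- for every `s ≥ 1`, `Ẽ_{2s}` is even, `Ẽ_{2s+1}` is odd, and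
`Ẽ_{2s}(±1) = 0`. -/
theorem EtCoef_parity_and_vanish (s : ℕ) (hs : 1 ≤ s) :
    (∀ β : ℝ, EtCoef (2 * s) (-β) = EtCoef (2 * s) β) ∧
    (∀ β : ℝ, EtCoef (2 * s + 1) (-β) = -EtCoef (2 * s + 1) β) ∧
    EtCoef (2 * s) 1 = 0 ∧ EtCoef (2 * s) (-1) = 0 :=
  EtCoef_parity_and_vanish_general s
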